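/- Let T ⊆ ℝ³ be a nonempty bounded open connected set and let ℓ ≥ 0 be an integer. For every vector field u of the form u = curl w₀ with w₀ ∈ P^ℓ(ℝ³)³, there exists a unique vector field v ∈ P^ℓ(ℝ³)³ such that curl v = u (as functions on ℝ³) and ∫_T v · (grad q) dx = 0 for every q ∈ P^{ℓ+1}(ℝ³). In other words, the curl restricted to the L²(T)-orthogonal complement in P^ℓ(ℝ³)³ of the space {grad q : q ∈ P^{ℓ+1}(ℝ³)} is a linear isomorphism onto the space {curl w : w ∈ P^ℓ(ℝ³)³}. -/

import Mathlib

open MvPolynomial MeasureTheory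

/-- The curl of a polynomial vector field on `ℝ³`, as a polynomial vector field. -/
noncomputable def pcurl3 (w : Fin 3 → MvPolynomial (Fin 3) ℝ) : Fin 3 → MvPolynomial (Fin 3) ℝ :=
  ![pderiv 1 (w 2) - pderiv 2 (w 1),
    pderiv 2 (w 0) - pderiv 0 (w 2),
    pderiv 0 (w 1) - pderiv 1 (w 0)]

/-!
The gradients `G` of polynomials of degree `≤ ℓ + 1` form a finite-dimensional space, and the
`L²(T)` form is positive definite on polynomial vector fields, since a polynomial vanishing on
a nonempty open set is zero. Hence `w₀ = grad q + v` with `v ⊥ G`, and `curl v = curl w₀`.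
If `v'` is another solution, `v - v'` is curl-free of degree `≤ ℓ`, so it is the gradient of
its radial antiderivative, of degree `≤ ℓ + 1` (polynomial Poincaré lemma, via Euler's
identity); thus `v - v' ∈ G ∩ G^⊥ = 0`.
-/

theorem LinearMap.BilinForm.IsSymm.exists_sub_mem_orthogonal {K V : Type*} [Field K]
    [AddCommGroup V] [Module K V] {B : LinearMap.BilinForm K V} (hB : B.IsSymm) {W : Submodule K V}
    [FiniteDimensional K W] (hW : (B.restrict W).Nondegenerate) (v : V) :
    ∃ w ∈ W, v - w ∈ B.orthogonal W := by
  set w := ((B.restrict W).toDual hW).symm ((B.flip v).domRestrict W)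
  refine ⟨w, w.2, fun x hx => ?_⟩
  have hwx : B w x = B x v := apply_toDual_symm_apply (hB := hW) _ ⟨x, hx⟩
  rw [map_sub, ← hB.eq w x, hwx, sub_self]

namespace MvPolynomial

variable {σ R : Type*} [CommSemiring R]

theorem pderiv_pderiv_comm (p : MvPolynomial σ R) (i j : σ) :
    pderiv i (pderiv j p) = pderiv j (pderiv i p) := by
  classical
  rcases eq_or_ne i j with rfl | hij
  · rfl
  ext m
  simp only [coeff_pderiv, add_right_comm m (Finsupp.single i 1), Finsupp.add_apply,
    Finsupp.single_eq_of_ne hij, Finsupp.single_eq_of_ne hij.symm, add_zero]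
  ring

theorem totalDegree_pderiv_le (p : MvPolynomial σ R) (i : σ) :
    (pderiv i p).totalDegree ≤ p.totalDegree - 1 := by
  classical
  refine Finset.sup_le fun m hm => ?_
  have hm' : m + Finsupp.single i 1 ∈ p.support := by
    rw [mem_support_iff, coeff_pderiv] at hm
    rw [mem_support_iff]
    exact left_ne_zero_of_mul hm
  have := le_totalDegree hm'
  rw [Finsupp.sum_add_index' (fun _ => rfl) (fun _ _ _ => rfl),
    Finsupp.sum_single_index rfl] at this
  omega

noncomputable def pgrad : MvPolynomial σ R →ₗ[R] σ → MvPolynomial σ R :=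
  LinearMap.pi fun i => (pderiv i).toLinearMap

@[simp]
theorem pgrad_apply (q : MvPolynomial σ R) (i : σ) : pgrad q i = pderiv i q := rfl

theorem coeff_sum_X_mul_pderiv [Fintype σ] (p : MvPolynomial σ R) (m : σ →₀ ℕ) :
    coeff m (∑ i, X i * pderiv i p) = m.degree * coeff m p := by
  classical
  induction p using MvPolynomial.induction_on' with
  | monomial n a =>
    simp_rw [X_mul_pderiv_monomial, ← Finset.sum_smul, ← Finsupp.degree_eq_sum, coeff_smul,
      coeff_monomial]
    split_ifs with h
    · subst h; simp
    · simp
  | add p q hp hq => simp only [map_add, mul_add, Finset.sum_add_distrib, coeff_add, hp, hq]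


section Poincare

variable {K : Type*} [Field K]

/-- On polynomials without constant term this inverts the Euler operator `∑ i, X i * pderiv i`. -/
noncomputable def divDegree (p : MvPolynomial σ K) : MvPolynomial σ K :=
  ∑ m ∈ p.support, monomial m (coeff m p / m.degree)

theorem coeff_divDegree (p : MvPolynomial σ K) (m : σ →₀ ℕ) :
    coeff m (divDegree p) = coeff m p / m.degree := by
  classical
  simp only [divDegree, coeff_sum, coeff_monomial, Finset.sum_ite_eq', mem_support_iff]
  split_ifs with h
  · rfl
  · rw [not_not.1 h, zero_div]

theorem totalDegree_divDegree_le (p : MvPolynomial σ K) :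
    (divDegree p).totalDegree ≤ p.totalDegree := by
  refine totalDegree_le_of_support_subset fun m hm => ?_
  rw [mem_support_iff, coeff_divDegree] at hm
  exact mem_support_iff.2 (div_ne_zero_iff.1 hm).1

theorem pderiv_sum_X_mul_of_pderiv_symm [Fintype σ] [DecidableEq σ] {d : σ → MvPolynomial σ R}
    (hd : ∀ i j, pderiv i (d j) = pderiv j (d i)) (j : σ) :
    pderiv j (∑ i, X i * d i) = d j + ∑ i, X i * pderiv i (d j) := by
  simp only [map_sum, pderiv_mul, pderiv_X, Finset.sum_add_distrib, Pi.single_apply, ite_mul,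
    one_mul, zero_mul, Finset.sum_ite_eq', Finset.mem_univ, if_true, hd j]

variable [Fintype σ] [CharZero K]

theorem pderiv_divDegree_sum_X_mul {d : σ → MvPolynomial σ K}
    (hd : ∀ i j, pderiv i (d j) = pderiv j (d i)) (j : σ) :
    pderiv j (divDegree (∑ i, X i * d i)) = d j := by
  classical
  ext m
  have key := congrArg (coeff m) (pderiv_sum_X_mul_of_pderiv_symm hd j)
  rw [coeff_pderiv, coeff_add, coeff_sum_X_mul_pderiv] at key
  rw [coeff_pderiv, coeff_divDegree, map_add, Finsupp.degree_single]
  have : ((m.degree + 1 : ℕ) : K) ≠ 0 := Nat.cast_ne_zero.2 m.degree.succ_ne_zero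
  field_simp
  push_cast at key ⊢
  linear_combination key

theorem exists_totalDegree_le_pgrad_eq {d : σ → MvPolynomial σ K} {n : ℕ}
    (hdeg : ∀ i, (d i).totalDegree ≤ n) (hd : ∀ i j, pderiv i (d j) = pderiv j (d i)) :
    ∃ q : MvPolynomial σ K, q.totalDegree ≤ n + 1 ∧ pgrad q = d := by
  refine ⟨divDegree (∑ i, X i * d i), (totalDegree_divDegree_le _).trans ?_,
    _root_.funext (pderiv_divDegree_sum_X_mul hd)⟩
  refine (totalDegree_finsetSum _ _).trans (Finset.sup_le fun i _ => ?_)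
  refine (totalDegree_mul _ _).trans ?_
  rw [totalDegree_X]
  linarith [hdeg i]

end Poincare

section L2

variable [Fintype σ] {T : Set (σ → ℝ)}

theorem eq_zero_of_eval_eq_zero_of_isOpen {p : MvPolynomial σ ℝ} (hopen : IsOpen T)
    (hne : T.Nonempty) (h : ∀ x ∈ T, eval x p = 0) : p = 0 := by
  obtain ⟨x, hx⟩ := hne
  obtain ⟨ε, hε, hball⟩ := Metric.isOpen_iff.1 hopen x hx
  refine funext_set (fun i => Metric.ball (x i) ε) (fun i => ?_) fun y hy => ?_
  · rw [Real.ball_eq_Ioo]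
    exact Set.Ioo_infinite (by linarith)
  · rw [map_zero]
    exact h y (hball (by rwa [ball_pi x hε]))

theorem continuous_sum_eval_mul (v w : σ → MvPolynomial σ ℝ) :
    Continuous fun x : σ → ℝ => ∑ i, eval x (v i) * eval x (w i) :=
  continuous_finsetSum _ fun _ _ => (continuous_eval _).mul (continuous_eval _)

theorem integrableOn_sum_eval_mul (hT : Bornology.IsBounded T) (v w : σ → MvPolynomial σ ℝ) :
    IntegrableOn (fun x => ∑ i, eval x (v i) * eval x (w i)) T :=
  ((continuous_sum_eval_mul v w).continuousOn.integrableOn_compact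
    hT.isCompact_closure).mono_set subset_closure

noncomputable def l2Form (hT : Bornology.IsBounded T) :
    LinearMap.BilinForm ℝ (σ → MvPolynomial σ ℝ) :=
  LinearMap.mk₂ ℝ (fun v w => ∫ x in T, ∑ i, eval x (v i) * eval x (w i))
    (fun v₁ v₂ w => by
      simp only [Pi.add_apply, map_add, add_mul, Finset.sum_add_distrib]
      exact integral_add (integrableOn_sum_eval_mul hT v₁ w)
        (integrableOn_sum_eval_mul hT v₂ w))
    (fun c v w => by
      simp only [Pi.smul_apply, smul_eval, mul_assoc, ← Finset.mul_sum, smul_eq_mul]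
      exact integral_const_mul _ _)
    (fun v w₁ w₂ => by
      simp only [Pi.add_apply, map_add, mul_add, Finset.sum_add_distrib]
      exact integral_add (integrableOn_sum_eval_mul hT v w₁)
        (integrableOn_sum_eval_mul hT v w₂))
    (fun c v w => by
      simp only [Pi.smul_apply, smul_eval, mul_left_comm _ c, ← Finset.mul_sum, smul_eq_mul]
      exact integral_const_mul _ _)

theorem l2Form_apply (hT : Bornology.IsBounded T) (v w : σ → MvPolynomial σ ℝ) :
    l2Form hT v w = ∫ x in T, ∑ i, eval x (v i) * eval x (w i) := rfl

theorem l2Form_isSymm (hT : Bornology.IsBounded T) : (l2Form hT).IsSymm :=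
  ⟨fun v w => by simp only [l2Form_apply, mul_comm]⟩

theorem eq_zero_of_l2Form_self_eq_zero (hT : Bornology.IsBounded T) (hopen : IsOpen T)
    (hne : T.Nonempty) {v : σ → MvPolynomial σ ℝ} (hv : l2Form hT v v = 0) : v = 0 := by
  have hnonneg : 0 ≤ fun x => ∑ i, eval x (v i) * eval x (v i) :=
    fun x => Finset.sum_nonneg fun i _ => mul_self_nonneg _
  have hae := (integral_eq_zero_iff_of_nonneg hnonneg (integrableOn_sum_eval_mul hT v v)).1 hv
  have hzero := Measure.eqOn_open_of_ae_eq hae hopen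
    (continuous_sum_eval_mul v v).continuousOn continuousOn_const
  funext i
  refine eq_zero_of_eval_eq_zero_of_isOpen hopen hne fun x hx => mul_self_eq_zero.1 ?_
  exact (Finset.sum_eq_zero_iff_of_nonneg fun i _ => mul_self_nonneg _).1 (hzero hx) i
    (Finset.mem_univ i)

theorem mem_l2Form_orthogonal_map_pgrad_iff (hT : Bornology.IsBounded T) {n : ℕ}
    {v : σ → MvPolynomial σ ℝ} :
    v ∈ (l2Form hT).orthogonal ((restrictTotalDegree σ ℝ n).map pgrad) ↔
      ∀ q : MvPolynomial σ ℝ, q.totalDegree ≤ n →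
        ∫ x in T, ∑ i, eval x (v i) * eval x (pderiv i q) = 0 := by
  simp only [LinearMap.BilinForm.mem_orthogonal_iff, Submodule.mem_map, mem_restrictTotalDegree,
    forall_exists_index, and_imp, forall_apply_eq_imp_iff₂, (l2Form_isSymm hT).eq _ v,
    l2Form_apply, pgrad_apply]

end L2

end MvPolynomial

theorem pcurl3_sub (v w : Fin 3 → MvPolynomial (Fin 3) ℝ) :
    pcurl3 (v - w) = pcurl3 v - pcurl3 w := by
  ext1 i
  fin_cases i <;> simp [pcurl3] <;> ring

theorem pcurl3_pgrad (q : MvPolynomial (Fin 3) ℝ) : pcurl3 (pgrad q) = 0 := by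
  ext1 i
  fin_cases i <;> simp [pcurl3, pderiv_pderiv_comm q]

theorem pderiv_symm_of_pcurl3_eq_zero {v : Fin 3 → MvPolynomial (Fin 3) ℝ} (h : pcurl3 v = 0)
    (i j : Fin 3) : pderiv i (v j) = pderiv j (v i) := by
  have h12 : pderiv 1 (v 2) = pderiv 2 (v 1) := sub_eq_zero.1 (congrFun h 0)
  have h20 : pderiv 2 (v 0) = pderiv 0 (v 2) := sub_eq_zero.1 (congrFun h 1)
  have h01 : pderiv 0 (v 1) = pderiv 1 (v 0) := sub_eq_zero.1 (congrFun h 2)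
  fin_cases i <;> fin_cases j <;> simp [h01, h12, h20]

theorem curl_iso_grad_orthogonal_complement_general (T : Set (Fin 3 → ℝ)) (hne : T.Nonempty)
    (hopen : IsOpen T) (hbdd : Bornology.IsBounded T)
    (ℓ : ℕ) (u : Fin 3 → MvPolynomial (Fin 3) ℝ)
    (hu : ∃ w₀ : Fin 3 → MvPolynomial (Fin 3) ℝ,
      (∀ i, (w₀ i).totalDegree ≤ ℓ) ∧ u = pcurl3 w₀) :
    ∃! v : Fin 3 → MvPolynomial (Fin 3) ℝ,
      (∀ i, (v i).totalDegree ≤ ℓ) ∧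
      (∀ (x : Fin 3 → ℝ) (i : Fin 3), eval x (pcurl3 v i) = eval x (u i)) ∧
      (∀ q : MvPolynomial (Fin 3) ℝ, q.totalDegree ≤ ℓ + 1 →
        (∫ x in T, ∑ i, eval x (v i) * eval x (pderiv i q)) = 0) := by
  obtain ⟨w₀, hw₀, rfl⟩ := hu
  set B := l2Form hbdd
  set G := (restrictTotalDegree (Fin 3) ℝ (ℓ + 1)).map pgrad
  have hB : ∀ v, B v v = 0 → v = 0 := fun v => eq_zero_of_l2Form_self_eq_zero hbdd hopen hne
  have hG : (B.restrict G).Nondegenerate :=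
    ((l2Form_isSymm hbdd).restrict G).isRefl.nondegenerate_iff_separatingLeft.2
      fun g hg => Subtype.ext (hB g (hg g))
  obtain ⟨_, ⟨q, hq, rfl⟩, horth⟩ := (l2Form_isSymm hbdd).exists_sub_mem_orthogonal hG w₀
  rw [SetLike.mem_coe, mem_restrictTotalDegree] at hq
  have hdeg : ∀ i, ((w₀ - pgrad q) i).totalDegree ≤ ℓ := fun i =>
    (totalDegree_sub _ _).trans <| max_le (hw₀ i) <|
      (totalDegree_pderiv_le q i).trans (by omega)
  have hcurl : pcurl3 (w₀ - pgrad q) = pcurl3 w₀ := by rw [pcurl3_sub, pcurl3_pgrad, sub_zero]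
  refine ⟨w₀ - pgrad q,
    ⟨hdeg, by simp [hcurl], (mem_l2Form_orthogonal_map_pgrad_iff hbdd).1 horth⟩, ?_⟩
  rintro v ⟨hv, hvcurl, hvorth⟩
  set d := v - (w₀ - pgrad q)
  have hdcurl : pcurl3 d = 0 := by
    rw [pcurl3_sub, hcurl, sub_eq_zero]
    exact funext fun i => MvPolynomial.funext fun x => hvcurl x i
  obtain ⟨p, hp, hpd⟩ := exists_totalDegree_le_pgrad_eq
    (fun i => (totalDegree_sub _ _).trans (max_le (hv i) (hdeg i)))
    (pderiv_symm_of_pcurl3_eq_zero hdcurl)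
  have hdG : d ∈ G := ⟨p, (mem_restrictTotalDegree _ _ _).2 hp, hpd⟩
  have hdorth : d ∈ B.orthogonal G :=
    sub_mem ((mem_l2Form_orthogonal_map_pgrad_iff hbdd).2 hvorth) horth
  exact sub_eq_zero.1 (hB d (hdorth d hdG))

/-- On a nonempty bounded open connected `T ⊆ ℝ³`, for every `u = curl w₀`
with `w₀ ∈ P^ℓ(ℝ³)³` there is a unique `v ∈ P^ℓ(ℝ³)³` with `curl v = u` as functions on `ℝ³`
and `v` `L²(T)`-orthogonal to `grad q` for all `q ∈ P^{ℓ+1}(ℝ³)`. -/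
theorem curl_iso_grad_orthogonal_complement (T : Set (Fin 3 → ℝ)) (hne : T.Nonempty)
    (hopen : IsOpen T) (hbdd : Bornology.IsBounded T) (hconn : IsConnected T)
    (ℓ : ℕ) (u : Fin 3 → MvPolynomial (Fin 3) ℝ)
    (hu : ∃ w₀ : Fin 3 → MvPolynomial (Fin 3) ℝ,
      (∀ i, (w₀ i).totalDegree ≤ ℓ) ∧ u = pcurl3 w₀) :
    ∃! v : Fin 3 → MvPolynomial (Fin 3) ℝ,
      (∀ i, (v i).totalDegree ≤ ℓ) ∧
      (∀ (x : Fin 3 → ℝ) (i : Fin 3), eval x (pcurl3 v i) = eval x (u i)) ∧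
      (∀ q : MvPolynomial (Fin 3) ℝ, q.totalDegree ≤ ℓ + 1 →
        (∫ x in T, ∑ i, eval x (v i) * eval x (pderiv i q)) = 0) :=
  curl_iso_grad_orthogonal_complement_general T hne hopen hbdd ℓ u hu
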